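/- Let (Ω, 𝓕, Q) satisfy the ergodic environment assumption, let Ω₀ ∈ 𝓕, let C > 0, and for each n ∈ ℕ and x ∈ ℤ^d let f_{n,x} : Ω → [0, C] be measurable. For k ∈ ℕ, define g_k(ω) := sup{ f_{n,y}(ω) : n ≥ k, y ∈ ℤ^d, |y| ≥ k }. Assume that for Q-almost every ω, 1_{Ω₀}(ω) · g_k(ω) → 0 as k → ∞. Then for Q-almost every ω and for every K > 0, one has (1/n^d) · Σ_{x ∈ ℤ^d, |x| ≤ Kn} 1_{Ω₀}(τ_x ω) · f_{n,x}(τ_x ω) → 0 as n → ∞. -/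

import Mathlib

/-!
Put `H_k = 1_{Ω₀} g_k`. For `n ≥ k`, the sum over `|x| ≤ K n` splits into the `O(k^d)` points with
`|x| < k`, each contributing at most `C`, and the others, where `1_{Ω₀} f_{n,x} ≤ H_k ∘ τ_x`.
It therefore suffices that almost surely some `H_k` has uniformly small ball averages
`n^{-d} ∑_{|x| ≤ K n} H_k (τ_x ω)`. Since `∫ H_k → 0` by dominated convergence, this follows from
the weak-type maximal inequality
`t · Q(sup_n n^{-d} ∑_{|x| ≤ K n} h ∘ τ_x > t) ≤ (9K)^d ∫ h`,
proved by a discrete Vitali covering argument along a single orbit and transferred to `Q` by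
integrating over a large cube of lattice points.
-/

open MeasureTheory Filter Topology

/-- The lattice point `x ∈ ℤ^d` viewed in `ℝ^d` (Euclidean space), so that `‖ZdEmbed d x‖`
is the Euclidean norm `|x|`. -/
noncomputable def ZdEmbed (d : ℕ) (x : Fin d → ℤ) : EuclideanSpace ℝ (Fin d) :=
  WithLp.toLp 2 (fun i => (x i : ℝ))

open Finset

section Lattice

variable {d : ℕ}

@[simp]
lemma ZdEmbed_apply (x : Fin d → ℤ) (i : Fin d) : ZdEmbed d x i = x i := rfl

lemma ZdEmbed_add (x y : Fin d → ℤ) : ZdEmbed d (x + y) = ZdEmbed d x + ZdEmbed d y := by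
  ext i; simp

lemma ZdEmbed_sub (x y : Fin d → ℤ) : ZdEmbed d (x - y) = ZdEmbed d x - ZdEmbed d y := by
  ext i; simp

lemma abs_sub_le_dist_ZdEmbed (x : Fin d → ℤ) (c : EuclideanSpace ℝ (Fin d)) (i : Fin d) :
    |(x i : ℝ) - c i| ≤ dist (ZdEmbed d x) c := by
  simpa [dist_eq_norm] using PiLp.norm_apply_le (ZdEmbed d x - c) i

lemma natCast_card_Icc_ceil_floor_le (a : ℝ) {ρ : ℝ} (hρ : 0 ≤ ρ) :
    (#(Icc ⌈a - ρ⌉ ⌊a + ρ⌋) : ℝ) ≤ 2 * ρ + 1 := by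
  rw [Int.card_Icc, ← Int.cast_natCast, Int.toNat_eq_max, Int.cast_max]
  push_cast
  refine max_le ?_ (by linarith)
  linarith [Int.floor_le (a + ρ), Int.le_ceil (a - ρ)]

-- The coordinate box only makes the set visibly finite; see `mem_latticeBall`.
noncomputable def latticeBall (d : ℕ) (c : EuclideanSpace ℝ (Fin d)) (ρ : ℝ) :
    Finset (Fin d → ℤ) :=
  {x ∈ Icc (fun i => ⌈c i - ρ⌉) (fun i => ⌊c i + ρ⌋) | dist (ZdEmbed d x) c ≤ ρ}

lemma mem_latticeBall {c : EuclideanSpace ℝ (Fin d)} {ρ : ℝ} {x : Fin d → ℤ} :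
    x ∈ latticeBall d c ρ ↔ dist (ZdEmbed d x) c ≤ ρ := by
  refine ⟨fun hx => (mem_filter.1 hx).2, fun hx => mem_filter.2 ⟨mem_Icc.2 ⟨?_, ?_⟩, hx⟩⟩
  all_goals intro i; have hi := abs_le.1 ((abs_sub_le_dist_ZdEmbed x c i).trans hx)
  · exact Int.ceil_le.2 (by linarith [hi.1])
  · exact Int.le_floor.2 (by linarith [hi.2])

lemma latticeBall_mono (c : EuclideanSpace ℝ (Fin d)) {ρ ρ' : ℝ} (h : ρ ≤ ρ') :
    latticeBall d c ρ ⊆ latticeBall d c ρ' :=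
  fun _ hx => mem_latticeBall.2 ((mem_latticeBall.1 hx).trans h)

lemma natCast_card_latticeBall_le (c : EuclideanSpace ℝ (Fin d)) {ρ : ℝ} (hρ : 0 ≤ ρ) :
    (#(latticeBall d c ρ) : ℝ) ≤ (2 * ρ + 1) ^ d := calc
  (#(latticeBall d c ρ) : ℝ) ≤ #(Icc (fun i => ⌈c i - ρ⌉) (fun i => ⌊c i + ρ⌋)) := by
    exact_mod_cast card_filter_le _ _
  _ = ∏ i, (#(Icc ⌈c i - ρ⌉ ⌊c i + ρ⌋) : ℝ) := by rw [Pi.card_Icc]; push_cast; rfl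
  _ ≤ ∏ _i : Fin d, (2 * ρ + 1) :=
    prod_le_prod (fun _ _ => by positivity) fun i _ => natCast_card_Icc_ceil_floor_le _ hρ
  _ = (2 * ρ + 1) ^ d := by simp

lemma sum_latticeBall_ZdEmbed (z : Fin d → ℤ) (ρ : ℝ) (ψ : (Fin d → ℤ) → ℝ) :
    ∑ y ∈ latticeBall d (ZdEmbed d z) ρ, ψ y = ∑ x ∈ latticeBall d 0 ρ, ψ (x + z) := by
  refine sum_nbij' (· - z) (· + z) (fun y hy => ?_) (fun x hx => ?_) (by simp) (by simp)
    (by simp)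
  · simpa [mem_latticeBall, ZdEmbed_sub, dist_eq_norm] using hy
  · simpa [mem_latticeBall, ZdEmbed_add, dist_eq_norm] using hx

noncomputable def latticeCube (d R : ℕ) : Finset (Fin d → ℤ) :=
  Icc (fun _ => -(R : ℤ)) (fun _ => (R : ℤ))

lemma card_latticeCube (d R : ℕ) : #(latticeCube d R) = (2 * R + 1) ^ d := by
  simp only [latticeCube, Pi.card_Icc, Int.card_Icc, prod_const, card_univ, Fintype.card_fin]
  congr 1
  omega

lemma latticeBall_subset_latticeCube {R s : ℕ} {z : Fin d → ℤ} (hz : z ∈ latticeCube d R)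
    {ρ : ℝ} (hρ : ρ ≤ s) : latticeBall d (ZdEmbed d z) ρ ⊆ latticeCube d (R + s) := by
  intro y hy
  simp only [latticeCube, mem_Icc, Pi.le_def] at hz ⊢
  have hyz i : |(y i : ℝ) - z i| ≤ s :=
    ((abs_sub_le_dist_ZdEmbed y _ i).trans (mem_latticeBall.1 hy)).trans hρ
  refine ⟨fun i => ?_, fun i => ?_⟩
  · have : (-(R + s : ℝ)) ≤ y i := by
      linarith [(abs_le.1 (hyz i)).1, (show (-R : ℝ) ≤ z i by exact_mod_cast hz.1 i)]
    exact_mod_cast this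
  · have : (y i : ℝ) ≤ R + s := by
      linarith [(abs_le.1 (hyz i)).2, (show (z i : ℝ) ≤ R by exact_mod_cast hz.2 i)]
    exact_mod_cast this

lemma tendsto_card_latticeCube_add_div (d s : ℕ) :
    Tendsto (fun R => (#(latticeCube d (R + s)) : ℝ) / #(latticeCube d R)) atTop (𝓝 1) := by
  simp only [card_latticeCube, Nat.cast_pow, ← div_pow]
  have h : Tendsto (fun R : ℕ => 1 + 2 * (s : ℝ) / (2 * R + 1)) atTop (𝓝 1) := by
    simpa using tendsto_const_nhds.add <| tendsto_const_nhds.div_atTop <|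
      tendsto_atTop_add_const_right _ 1 <|
        (tendsto_natCast_atTop_atTop (R := ℝ)).const_mul_atTop two_pos
  have h' := h.pow d
  rw [one_pow] at h'
  refine h'.congr fun R => ?_
  congr 1
  field_simp
  push_cast
  ring

end Lattice

section Covering

variable {d : ℕ}

lemma exists_pairwiseDisjoint_latticeBall_cover (E : Finset (Fin d → ℤ)) {r : (Fin d → ℤ) → ℝ}
    (hr : ∀ z ∈ E, 0 ≤ r z) :
    ∃ U ⊆ E, (U : Set (Fin d → ℤ)).PairwiseDisjoint (fun b => latticeBall d (ZdEmbed d b) (r b)) ∧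
      E ⊆ U.biUnion fun b => latticeBall d (ZdEmbed d b) (4 * r b) := by
  classical
  obtain ⟨u, huE, hdisj, hcov⟩ :=
    Vitali.exists_disjoint_subfamily_covering_enlargement_closedBall (E : Set (Fin d → ℤ))
      (ZdEmbed d) r (∑ z ∈ E, r z) (fun z hz => single_le_sum hr hz) 4 (by norm_num)
  refine ⟨{b ∈ E | b ∈ u}, filter_subset _ _, fun b hb b' hb' hne => ?_, fun a ha => ?_⟩
  · refine disjoint_left.2 fun y hy hy' => ?_
    exact Set.disjoint_left.1 (hdisj (mem_filter.1 hb).2 (mem_filter.1 hb').2 hne)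
      (mem_latticeBall.1 hy) (mem_latticeBall.1 hy')
  · obtain ⟨b, hbu, hab⟩ := hcov a ha
    exact mem_biUnion.2 ⟨b, mem_filter.2 ⟨huE hbu, hbu⟩,
      mem_latticeBall.2 (hab (Metric.mem_closedBall_self (hr a ha)))⟩

-- `9 = 2 · 4 + 1`: the Vitali enlargement factor is `4`, and a ball of radius `4ρ ≥ 4` has at
-- most `(8ρ + 1) ^ d ≤ (9ρ) ^ d` lattice points.
theorem natCast_card_mul_le_of_heavy_latticeBall {E S : Finset (Fin d → ℤ)}
    {φ : (Fin d → ℤ) → ℝ} (hφ : ∀ y, 0 ≤ φ y) {t : ℝ} (ht : 0 < t)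
    (hE : ∀ z ∈ E, ∃ ρ : ℝ, 1 ≤ ρ ∧ latticeBall d (ZdEmbed d z) ρ ⊆ S ∧
      t * ρ ^ d < ∑ y ∈ latticeBall d (ZdEmbed d z) ρ, φ y) :
    #E * t ≤ 9 ^ d * ∑ y ∈ S, φ y := by
  classical
  choose! r hr1 hrS hrφ using hE
  obtain ⟨U, hUE, hdisj, hcover⟩ :=
    exists_pairwiseDisjoint_latticeBall_cover E fun z hz => zero_le_one.trans (hr1 z hz)
  have hcard : (#E : ℝ) ≤ ∑ b ∈ U, (#(latticeBall d (ZdEmbed d b) (4 * r b)) : ℝ) := by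
    exact_mod_cast (card_le_card hcover).trans card_biUnion_le
  have hball b (hb : b ∈ U) : (#(latticeBall d (ZdEmbed d b) (4 * r b)) : ℝ) ≤ (9 * r b) ^ d :=
    (natCast_card_latticeBall_le _ (by linarith [hr1 b (hUE hb)])).trans <|
      pow_le_pow_left₀ (by linarith [hr1 b (hUE hb)]) (by linarith [hr1 b (hUE hb)]) d
  calc #E * t ≤ (∑ b ∈ U, (9 * r b) ^ d) * t := by gcongr; exact hcard.trans (sum_le_sum hball)
    _ = 9 ^ d * ∑ b ∈ U, t * r b ^ d := by rw [sum_mul, mul_sum]; congr! 1 with b; ring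
    _ ≤ 9 ^ d * ∑ b ∈ U, ∑ y ∈ latticeBall d (ZdEmbed d b) (r b), φ y := by
      gcongr with b hb; exact (hrφ b (hUE hb)).le
    _ = 9 ^ d * ∑ y ∈ U.biUnion fun b => latticeBall d (ZdEmbed d b) (r b), φ y := by
      rw [sum_biUnion hdisj]
    _ ≤ 9 ^ d * ∑ y ∈ S, φ y := by
      gcongr
      · exact fun y _ _ => hφ y
      · exact biUnion_subset.2 fun b hb => hrS b (hUE hb)

end Covering

section Maximal

variable {d : ℕ} {Ω : Type*} {τ : (Fin d → ℤ) → Ω → Ω} {h : Ω → ℝ}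

noncomputable def orbitBallSum (τ : (Fin d → ℤ) → Ω → Ω) (h : Ω → ℝ) (ρ : ℝ) (ω : Ω) : ℝ :=
  ∑ x ∈ latticeBall d 0 ρ, h (τ x ω)

lemma orbitBallSum_apply_eq (hτ_add : ∀ z w, τ (z + w) = τ z ∘ τ w) (ρ : ℝ) (z : Fin d → ℤ)
    (ω : Ω) :
    orbitBallSum τ h ρ (τ z ω) = ∑ y ∈ latticeBall d (ZdEmbed d z) ρ, h (τ y ω) := by
  simp [orbitBallSum, sum_latticeBall_ZdEmbed, hτ_add]

lemma orbitBallSum_mono (h0 : ∀ ω, 0 ≤ h ω) {ρ ρ' : ℝ} (hρ : ρ ≤ ρ') (ω : Ω) :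
    orbitBallSum τ h ρ ω ≤ orbitBallSum τ h ρ' ω :=
  sum_le_sum_of_subset_of_nonneg (latticeBall_mono 0 hρ) fun _ _ _ => h0 _

variable [MeasurableSpace Ω] {Q : Measure Ω}

lemma measurable_orbitBallSum (hτ : ∀ z, Measurable (τ z)) (hh : Measurable h) (ρ : ℝ) :
    Measurable (orbitBallSum τ h ρ) :=
  Finset.measurable_sum _ fun x _ => hh.comp (hτ x)

lemma integrable_sum_comp (hτ_pres : ∀ z, MeasurePreserving (τ z) Q Q) (hh : Integrable h Q)
    (S : Finset (Fin d → ℤ)) : Integrable (fun ω => ∑ z ∈ S, h (τ z ω)) Q :=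
  integrable_finsetSum S fun z _ => (hτ_pres z).integrable_comp_of_integrable hh

lemma integral_sum_comp_eq (hτ_pres : ∀ z, MeasurePreserving (τ z) Q Q) (hh : Integrable h Q)
    (S : Finset (Fin d → ℤ)) : ∫ ω, ∑ z ∈ S, h (τ z ω) ∂Q = #S * ∫ ω, h ω ∂Q := by
  rw [integral_finsetSum (f := fun z ω => h (τ z ω)) S
    fun z _ => (hτ_pres z).integrable_comp_of_integrable hh]
  have hz z : ∫ ω, h (τ z ω) ∂Q = ∫ ω, h ω ∂Q := by
    rw [← integral_map (hτ_pres z).aemeasurable (by rw [(hτ_pres z).map_eq]; exact hh.1),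
      (hτ_pres z).map_eq]
  simp [hz]

lemma le_of_forall_card_latticeCube_mul_le {a b : ℝ} (s : ℕ)
    (h : ∀ R, #(latticeCube d R) * a ≤ #(latticeCube d (R + s)) * b) : a ≤ b := by
  refine le_of_tendsto_of_tendsto' tendsto_const_nhds
    (by simpa using (tendsto_card_latticeCube_add_div d s).const_mul b) fun R => ?_
  have hpos : (0 : ℝ) < #(latticeCube d R) := by
    rw [card_latticeCube]; positivity
  rw [mul_div_assoc', le_div_iff₀ hpos, mul_comm a, mul_comm b]
  exact h R

variable [IsFiniteMeasure Q]

-- Transference: integrate the covering bound along orbits over a large cube of centres; the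
-- boundary layer of width `K T` becomes negligible as the cube grows.
theorem measureReal_maximal_le_of_le (hτ_add : ∀ z w, τ (z + w) = τ z ∘ τ w)
    (hτ_pres : ∀ z, MeasurePreserving (τ z) Q Q) (hh : Measurable h) (h0 : ∀ ω, 0 ≤ h ω)
    (hint : Integrable h Q) {K : ℝ} (hK : 1 ≤ K) {t : ℝ} (ht : 0 < t) (T : ℕ) :
    Q.real {ω | ∃ n : ℕ, 1 ≤ n ∧ n ≤ T ∧ t * n ^ d < orbitBallSum τ h (K * n) ω} * t ≤
      (9 * K) ^ d * ∫ ω, h ω ∂Q := by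
  classical
  set G := {ω | ∃ n : ℕ, 1 ≤ n ∧ n ≤ T ∧ t * n ^ d < orbitBallSum τ h (K * n) ω}
  have hτ z := (hτ_pres z).measurable
  have hG : MeasurableSet G := by
    simp only [G, Set.ofPred_exists, Set.ofPred_and]
    exact .iUnion fun n => (MeasurableSet.const _).inter <| (MeasurableSet.const _).inter <|
      measurableSet_lt measurable_const (measurable_orbitBallSum hτ hh _)
  set s := ⌈K * T⌉₊
  have hKd : (0 : ℝ) < K ^ d := by positivity
  have hpointwise R ω : (∑ z ∈ latticeCube d R, G.indicator 1 (τ z ω)) * (t / K ^ d) ≤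
      9 ^ d * ∑ y ∈ latticeCube d (R + s), h (τ y ω) := by
    simp only [Set.indicator_apply, Pi.one_apply, sum_boole]
    refine natCast_card_mul_le_of_heavy_latticeBall (fun y => h0 _) (by positivity) ?_
    intro z hz
    obtain ⟨hzR, n, hn, hnT, hsum⟩ := mem_filter.1 hz
    refine ⟨K * n, one_le_mul_of_one_le_of_one_le hK (by exact_mod_cast hn),
      latticeBall_subset_latticeCube hzR ((?_ : K * n ≤ K * T).trans (Nat.le_ceil _)), ?_⟩
    · gcongr
    · rw [← orbitBallSum_apply_eq hτ_add]
      convert hsum using 1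
      field_simp
      ring
  have hintegrated R : #(latticeCube d R) * (Q.real G * (t / K ^ d)) ≤
      #(latticeCube d (R + s)) * (9 ^ d * ∫ ω, h ω ∂Q) := by
    have hG_int : Integrable (G.indicator (1 : Ω → ℝ)) Q := (integrable_const 1).indicator hG
    calc #(latticeCube d R) * (Q.real G * (t / K ^ d))
        = ∫ ω, (∑ z ∈ latticeCube d R, G.indicator 1 (τ z ω)) * (t / K ^ d) ∂Q := by
          rw [integral_mul_const, integral_sum_comp_eq hτ_pres hG_int, integral_indicator_one hG]
          ring
      _ ≤ ∫ ω, 9 ^ d * ∑ y ∈ latticeCube d (R + s), h (τ y ω) ∂Q :=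
          integral_mono ((integrable_sum_comp hτ_pres hG_int _).mul_const _)
            ((integrable_sum_comp hτ_pres hint _).const_mul _) (hpointwise R)
      _ = #(latticeCube d (R + s)) * (9 ^ d * ∫ ω, h ω ∂Q) := by
          rw [integral_const_mul, integral_sum_comp_eq hτ_pres hint]
          ring
  have := le_of_forall_card_latticeCube_mul_le s hintegrated
  rw [mul_pow]
  field_simp at this ⊢
  linarith

theorem measureReal_maximal_le (hτ_add : ∀ z w, τ (z + w) = τ z ∘ τ w)
    (hτ_pres : ∀ z, MeasurePreserving (τ z) Q Q) (hh : Measurable h) (h0 : ∀ ω, 0 ≤ h ω)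
    (hint : Integrable h Q) {K : ℝ} (hK : 1 ≤ K) {t : ℝ} (ht : 0 < t) :
    Q.real {ω | ∃ n : ℕ, 1 ≤ n ∧ t * n ^ d < orbitBallSum τ h (K * n) ω} * t ≤
      (9 * K) ^ d * ∫ ω, h ω ∂Q := by
  set G : ℕ → Set Ω :=
    fun T => {ω | ∃ n : ℕ, 1 ≤ n ∧ n ≤ T ∧ t * n ^ d < orbitBallSum τ h (K * n) ω}
  have hG_mono : Monotone G := fun T T' hT ω ⟨n, hn, hnT, hsum⟩ => ⟨n, hn, hnT.trans hT, hsum⟩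
  have hG_union : ⋃ T, G T = {ω | ∃ n : ℕ, 1 ≤ n ∧ t * n ^ d < orbitBallSum τ h (K * n) ω} := by
    ext ω
    simp only [G, Set.mem_iUnion, Set.mem_ofPred_eq]
    exact ⟨fun ⟨_, n, hn, _, hsum⟩ => ⟨n, hn, hsum⟩, fun ⟨n, hn, hsum⟩ => ⟨n, n, hn, le_rfl, hsum⟩⟩
  rw [← hG_union]
  refine le_of_tendsto' (((ENNReal.tendsto_toReal (measure_ne_top Q _)).comp
    (tendsto_measure_iUnion_atTop hG_mono)).mul_const t) fun T => ?_
  exact measureReal_maximal_le_of_le hτ_add hτ_pres hh h0 hint hK ht T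

theorem ae_exists_forall_orbitBallSum_le (hτ_add : ∀ z w, τ (z + w) = τ z ∘ τ w)
    (hτ_pres : ∀ z, MeasurePreserving (τ z) Q Q) {H : ℕ → Ω → ℝ} (hH : ∀ k, Measurable (H k))
    (hH0 : ∀ k ω, 0 ≤ H k ω) (hH_int : ∀ k, Integrable (H k) Q)
    (hH_lim : Tendsto (fun k => ∫ ω, H k ω ∂Q) atTop (𝓝 0)) :
    ∀ᵐ ω ∂Q, ∀ K : ℝ, ∀ ε > 0, ∃ k, ∀ n : ℕ, 1 ≤ n →
      orbitBallSum τ (H k) (K * n) ω ≤ ε * n ^ d := by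
  have key (K m : ℕ) : ∀ᵐ ω ∂Q, ∃ k, ∀ n : ℕ, 1 ≤ n →
      orbitBallSum τ (H k) ((K + 1 : ℕ) * n) ω ≤ ((m : ℝ) + 1)⁻¹ * n ^ d := by
    set t : ℝ := ((m : ℝ) + 1)⁻¹
    have ht : 0 < t := by positivity
    set D : ℕ → Set Ω :=
      fun k => {ω | ∃ n : ℕ, 1 ≤ n ∧ t * n ^ d < orbitBallSum τ (H k) ((K + 1 : ℕ) * n) ω}
    have hD k : Q.real (⋂ j, D j) * t ≤ (9 * (K + 1 : ℕ)) ^ d * ∫ ω, H k ω ∂Q :=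
      (mul_le_mul_of_nonneg_right (measureReal_mono (Set.iInter_subset D k)) ht.le).trans <|
        measureReal_maximal_le hτ_add hτ_pres (hH k) (hH0 k) (hH_int k)
          (by norm_num) ht
    have hnull : Q (⋂ k, D k) = 0 := by
      have := ge_of_tendsto' (by simpa using hH_lim.const_mul ((9 * (K + 1 : ℕ) : ℝ) ^ d)) hD
      rw [← measureReal_eq_zero_iff]
      exact le_antisymm (nonpos_of_mul_nonpos_left this ht) measureReal_nonneg
    filter_upwards [measure_eq_zero_iff_ae_notMem.1 hnull] with ω hω
    simp only [Set.mem_iInter, not_forall, D, Set.mem_ofPred_eq, not_exists, not_and,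
      not_lt] at hω
    exact hω
  simp only [← ae_all_iff] at key
  filter_upwards [key] with ω hω K ε hε
  obtain ⟨m, hm⟩ := exists_nat_one_div_lt hε
  obtain ⟨k, hk⟩ := hω ⌈K⌉₊ m
  refine ⟨k, fun n hn => ?_⟩
  calc orbitBallSum τ (H k) (K * n) ω ≤ orbitBallSum τ (H k) ((⌈K⌉₊ + 1 : ℕ) * n) ω := by
        refine orbitBallSum_mono (hH0 k) (by gcongr; push_cast; linarith [Nat.le_ceil K]) ω
    _ ≤ ((m : ℝ) + 1)⁻¹ * n ^ d := hk n hn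
    _ ≤ ε * n ^ d := by gcongr; simpa using hm.le

end Maximal

section Averages

variable {d : ℕ}

lemma tsum_indicator_eq_sum_latticeBall (ρ : ℝ) (F : (Fin d → ℤ) → ℝ) :
    ∑' x, {x : Fin d → ℤ | ‖ZdEmbed d x‖ ≤ ρ}.indicator F x = ∑ x ∈ latticeBall d 0 ρ, F x := by
  have hmem {x} : x ∈ latticeBall d 0 ρ ↔ x ∈ {x : Fin d → ℤ | ‖ZdEmbed d x‖ ≤ ρ} := by
    simp [mem_latticeBall]
  rw [tsum_eq_sum fun x hx => Set.indicator_of_notMem (hmem.not.1 hx) F]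
  exact sum_congr rfl fun x hx => Set.indicator_of_mem (hmem.1 hx) F

theorem tendsto_average_latticeBall_of_tail_le (hd : 0 < d) {C K : ℝ}
    {F φ : ℕ → (Fin d → ℤ) → ℝ} (hF0 : ∀ n x, 0 ≤ F n x) (hFC : ∀ n x, F n x ≤ C)
    (hφ0 : ∀ k x, 0 ≤ φ k x)
    (hFφ : ∀ (k n : ℕ) x, k ≤ n → (k : ℝ) ≤ ‖ZdEmbed d x‖ → F n x ≤ φ k x)
    (hφ : ∀ ε > 0, ∃ k, ∀ n : ℕ, 1 ≤ n → ∑ x ∈ latticeBall d 0 (K * n), φ k x ≤ ε * n ^ d) :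
    Tendsto (fun n : ℕ => 1 / (n : ℝ) ^ d * ∑ x ∈ latticeBall d 0 (K * n), F n x) atTop
      (𝓝 0) := by
  have hC : 0 ≤ C := (hF0 0 0).trans (hFC 0 0)
  have hsplit (k n : ℕ) (hkn : k ≤ n) : ∑ x ∈ latticeBall d 0 (K * n), F n x ≤
      C * #(latticeBall d 0 k) + ∑ x ∈ latticeBall d 0 (K * n), φ k x := by
    classical
    have hpt x : F n x ≤ (if x ∈ latticeBall d 0 k then C else 0) + φ k x := by
      by_cases hx : x ∈ latticeBall d 0 k
      · simpa [hx] using (hFC n x).trans (le_add_of_nonneg_right (hφ0 k x))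
      · simp only [hx, if_false, zero_add]
        refine hFφ k n x hkn ?_
        simpa [mem_latticeBall] using (not_le.1 (mt mem_latticeBall.2 hx)).le
    calc ∑ x ∈ latticeBall d 0 (K * n), F n x
        ≤ ∑ x ∈ latticeBall d 0 (K * n), ((if x ∈ latticeBall d 0 k then C else 0) + φ k x) :=
          sum_le_sum fun x _ => hpt x
      _ ≤ ∑ _x ∈ latticeBall d 0 k, C + ∑ x ∈ latticeBall d 0 (K * n), φ k x := by
          rw [sum_add_distrib, sum_ite_mem]
          gcongr
          exact inter_subset_right
      _ = C * #(latticeBall d 0 k) + ∑ x ∈ latticeBall d 0 (K * n), φ k x := by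
          rw [sum_const, nsmul_eq_mul, mul_comm]
  refine tendsto_order.2 ⟨fun a ha => Eventually.of_forall fun n =>
    ha.trans_le (mul_nonneg (by positivity) (sum_nonneg fun x _ => hF0 n x)), fun a ha => ?_⟩
  obtain ⟨k, hk⟩ := hφ (a / 2) (half_pos ha)
  have hnear : Tendsto (fun n : ℕ => C * #(latticeBall d 0 k) / (n : ℝ) ^ d) atTop (𝓝 0) :=
    tendsto_const_nhds.div_atTop <|
      (tendsto_pow_atTop hd.ne').comp tendsto_natCast_atTop_atTop
  filter_upwards [hnear.eventually (gt_mem_nhds (half_pos ha)), eventually_ge_atTop (max k 1)]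
    with n hnear hn
  have hn1 : 1 ≤ n := le_of_max_le_right hn
  have hkn : k ≤ n := le_of_max_le_left hn
  have hnd : (0 : ℝ) < (n : ℝ) ^ d := by positivity
  calc 1 / (n : ℝ) ^ d * ∑ x ∈ latticeBall d 0 (K * n), F n x
      ≤ 1 / (n : ℝ) ^ d * (C * #(latticeBall d 0 k) + a / 2 * n ^ d) := by
        gcongr
        exact (hsplit k n hkn).trans (by gcongr; exact hk n hn1)
    _ = C * #(latticeBall d 0 k) / (n : ℝ) ^ d + a / 2 := by field_simp
    _ < a / 2 + a / 2 := by gcongr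
    _ = a := add_halves a

end Averages

section TailSup

variable {d : ℕ} {Ω : Type*} {f : ℕ → (Fin d → ℤ) → Ω → ℝ} {C : ℝ}

noncomputable def tailSup (f : ℕ → (Fin d → ℤ) → Ω → ℝ) (k : ℕ) (ω : Ω) : ℝ :=
  sSup {r : ℝ | ∃ n : ℕ, ∃ y : Fin d → ℤ, k ≤ n ∧ (k : ℝ) ≤ ‖ZdEmbed d y‖ ∧ r = f n y ω}

lemma tailSup_nonneg (hf0 : ∀ n x ω, 0 ≤ f n x ω) (k : ℕ) (ω : Ω) : 0 ≤ tailSup f k ω :=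
  Real.sSup_nonneg <| by rintro r ⟨n, y, -, -, rfl⟩; exact hf0 n y ω

lemma tailSup_le (hfC : ∀ n x ω, f n x ω ≤ C) (hC : 0 ≤ C) (k : ℕ) (ω : Ω) :
    tailSup f k ω ≤ C :=
  Real.sSup_le (by rintro r ⟨n, y, -, -, rfl⟩; exact hfC n y ω) hC

lemma le_tailSup (hfC : ∀ n x ω, f n x ω ≤ C) {k n : ℕ} {x : Fin d → ℤ} (hkn : k ≤ n)
    (hkx : (k : ℝ) ≤ ‖ZdEmbed d x‖) (ω : Ω) : f n x ω ≤ tailSup f k ω :=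
  le_csSup ⟨C, by rintro r ⟨n, y, -, -, rfl⟩; exact hfC n y ω⟩ ⟨n, x, hkn, hkx, rfl⟩

lemma measurable_tailSup [MeasurableSpace Ω] (hf : ∀ n x, Measurable (f n x)) (k : ℕ) :
    Measurable (tailSup f k) := by
  have : tailSup f k = fun ω =>
      ⨆ p : {p : ℕ × (Fin d → ℤ) // k ≤ p.1 ∧ (k : ℝ) ≤ ‖ZdEmbed d p.2‖}, f p.1.1 p.1.2 ω := by
    ext ω
    simp only [tailSup, iSup]
    congr 1
    ext r
    exact ⟨fun ⟨n, y, hn, hy, hr⟩ => ⟨⟨(n, y), hn, hy⟩, hr.symm⟩,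
      fun ⟨⟨⟨n, y⟩, hn, hy⟩, hr⟩ => ⟨n, y, hn, hy, hr.symm⟩⟩
  rw [this]
  exact .iSup fun p => hf p.1.1 p.1.2

end TailSup

lemma indicator_one_mul_mem_Icc {α : Type*} (s : Set α) {a C : ℝ} (ha : a ∈ Set.Icc 0 C)
    (x : α) : s.indicator (fun _ => (1 : ℝ)) x * a ∈ Set.Icc 0 C := by
  by_cases hx : x ∈ s
  · simpa [hx] using ha
  · simpa [hx] using ha.1.trans ha.2

theorem stmt2_general
    (d : ℕ) (hd : 1 ≤ d)
    {Ω : Type*} [MeasurableSpace Ω] (Q : Measure Ω) [IsProbabilityMeasure Q]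
    (τ : (Fin d → ℤ) → Ω → Ω)
    (hτ_add : ∀ z w, τ (z + w) = τ z ∘ τ w)
    (hτ_pres : ∀ z, MeasurePreserving (τ z) Q Q)
    (Ω₀ : Set Ω) (hΩ₀_meas : MeasurableSet Ω₀)
    (C : ℝ) (hC : 0 < C)
    (f : ℕ → (Fin d → ℤ) → Ω → ℝ)
    (hf_meas : ∀ n x, Measurable (f n x))
    (hf_nonneg : ∀ n x ω, 0 ≤ f n x ω)
    (hf_bdd : ∀ n x ω, f n x ω ≤ C)
    (g : ℕ → Ω → ℝ)
    (hg : ∀ k ω, g k ω =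
      sSup { r : ℝ | ∃ n : ℕ, ∃ y : Fin d → ℤ, k ≤ n ∧
        (k : ℝ) ≤ ‖ZdEmbed d y‖ ∧ r = f n y ω })
    (hg_to_zero : ∀ᵐ ω ∂Q,
      Tendsto (fun k : ℕ => Ω₀.indicator (fun _ => (1 : ℝ)) ω * g k ω) atTop (𝓝 0)) :
    ∀ᵐ ω ∂Q, ∀ K : ℝ, 0 < K →
      Tendsto (fun n : ℕ =>
        (1 / (n : ℝ) ^ d) * ∑' x : Fin d → ℤ,
          Set.indicator { x : Fin d → ℤ |
              ‖ZdEmbed d x‖ ≤ K * n }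
            (fun x => Ω₀.indicator (fun _ => (1 : ℝ)) (τ x ω) * f n x (τ x ω)) x)
        atTop (𝓝 0) := by
  obtain rfl : g = tailSup f := funext₂ hg
  set H : ℕ → Ω → ℝ := fun k ω => Ω₀.indicator (fun _ => (1 : ℝ)) ω * tailSup f k ω
  have hH_mem k ω : H k ω ∈ Set.Icc 0 C :=
    indicator_one_mul_mem_Icc Ω₀ ⟨tailSup_nonneg hf_nonneg k ω, tailSup_le hf_bdd hC.le k ω⟩ ω
  have hH_meas k : Measurable (H k) :=
    (measurable_const.indicator hΩ₀_meas).mul (measurable_tailSup hf_meas k)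
  have hH_norm k ω : ‖H k ω‖ ≤ C := by
    rw [Real.norm_of_nonneg (hH_mem k ω).1]; exact (hH_mem k ω).2
  have hH_int k : Integrable (H k) Q :=
    .of_bound (hH_meas k).aestronglyMeasurable C (.of_forall (hH_norm k))
  have hH_lim : Tendsto (fun k => ∫ ω, H k ω ∂Q) atTop (𝓝 0) := by
    simpa using tendsto_integral_filter_of_norm_le_const
      (.of_forall fun k => (hH_meas k).aestronglyMeasurable)
      ⟨C, .of_forall fun k => .of_forall (hH_norm k)⟩ hg_to_zero
  filter_upwards [ae_exists_forall_orbitBallSum_le hτ_add hτ_pres hH_meas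
    (fun k ω => (hH_mem k ω).1) hH_int hH_lim] with ω hω K _
  simp_rw [tsum_indicator_eq_sum_latticeBall]
  refine tendsto_average_latticeBall_of_tail_le hd
    (fun n x => (indicator_one_mul_mem_Icc Ω₀ ⟨hf_nonneg n x _, hf_bdd n x _⟩ _).1)
    (fun n x => (indicator_one_mul_mem_Icc Ω₀ ⟨hf_nonneg n x _, hf_bdd n x _⟩ _).2)
    (fun k x => (hH_mem k (τ x ω)).1) (fun k n x hkn hkx => ?_) (hω K)
  exact mul_le_mul_of_nonneg_left (le_tailSup hf_bdd hkn hkx _)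
    (Set.indicator_nonneg (fun _ _ => zero_le_one) _)

/-- Ergodic-averaging core: if `1_{Ω₀} · g_k → 0` `Q`-a.s., where
`g_k(ω) = sup{ f_{n,y}(ω) : n ≥ k, |y| ≥ k }`, then for `Q`-a.e. `ω` and every `K > 0`,
`(1/n^d) ∑_{|x| ≤ Kn} 1_{Ω₀}(τ_x ω) f_{n,x}(τ_x ω) → 0`. -/
theorem stmt2
    (d : ℕ) (hd : 1 ≤ d)
    {Ω : Type*} [MeasurableSpace Ω] (Q : Measure Ω) [IsProbabilityMeasure Q]
    (τ : (Fin d → ℤ) → Ω → Ω)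
    (hτ_meas : ∀ z, Measurable (τ z))
    (hτ_zero : τ 0 = id)
    (hτ_add : ∀ z w, τ (z + w) = τ z ∘ τ w)
    (hτ_pres : ∀ z, MeasurePreserving (τ z) Q Q)
    (hτ_erg : ∀ A : Set Ω, MeasurableSet A → (∀ z, τ z ⁻¹' A = A) → Q A = 0 ∨ Q A = 1)
    (Ω₀ : Set Ω) (hΩ₀_meas : MeasurableSet Ω₀)
    (C : ℝ) (hC : 0 < C)
    (f : ℕ → (Fin d → ℤ) → Ω → ℝ)
    (hf_meas : ∀ n x, Measurable (f n x))
    (hf_nonneg : ∀ n x ω, 0 ≤ f n x ω)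
    (hf_bdd : ∀ n x ω, f n x ω ≤ C)
    (g : ℕ → Ω → ℝ)
    (hg : ∀ k ω, g k ω =
      sSup { r : ℝ | ∃ n : ℕ, ∃ y : Fin d → ℤ, k ≤ n ∧
        (k : ℝ) ≤ ‖ZdEmbed d y‖ ∧ r = f n y ω })
    (hg_to_zero : ∀ᵐ ω ∂Q,
      Tendsto (fun k : ℕ => Ω₀.indicator (fun _ => (1 : ℝ)) ω * g k ω) atTop (𝓝 0)) :
    ∀ᵐ ω ∂Q, ∀ K : ℝ, 0 < K →
      Tendsto (fun n : ℕ =>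
        (1 / (n : ℝ) ^ d) * ∑' x : Fin d → ℤ,
          Set.indicator { x : Fin d → ℤ |
              ‖ZdEmbed d x‖ ≤ K * n }
            (fun x => Ω₀.indicator (fun _ => (1 : ℝ)) (τ x ω) * f n x (τ x ω)) x)
        atTop (𝓝 0) :=
  stmt2_general d hd Q τ hτ_add hτ_pres Ω₀ hΩ₀_meas C hC f hf_meas hf_nonneg hf_bdd g hg hg_to_zero
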